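/- arXiv:2208.10927 — 3 statements merged into one kernel-verified Lean document; each statement's English description precedes it below -/
import Mathlib

section
/- Let T > 0, τ > 0, f_max > 0, a > 0, c₃ > 0, c₄ > 0, d > 0, s_max > 0, E_F0 ≥ 0, E_G0 ≥ 0. Let s : [0,T] → ℝ be measurable with 0 ≤ s(t) ≤ s_max a.e., and let glyc : ℝ → ℝ be continuous with 0 ≤ glyc(v) ≤ 1 for all v. Then the admissible set A = { f : [0,T] → ℝ measurable | 0 ≤ f(t) ≤ f_max a.e., and E_F[f](t) ≥ 0 and E_G[f](t) ≥ 0 for all t ∈ [0,T] } contains a control f* that maximizes the distance functional: ∫₀^T V[f*](t) dt = sup_{f ∈ A} ∫₀^T V[f](t) dt. (Existence of an optimal propulsion force for the maximum–distance runner problem.) -/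
/-!
The direct method of the calculus of variations. Controls with values in `[0, fmax]` are
compared through their primitives, which are equi-Lipschitz: a diagonal argument over the
rationals gives a pointwise convergent subsequence, and the Lipschitz, monotone limit is the
primitive of its derivative `g`, again a control with values in `[0, fmax]` (the weak-* limit).
Convergence of the primitives gives `∫ ψ fₙ → ∫ ψ g` for every continuous `ψ` (Riemann sums),
hence pointwise convergence of the velocities `V[fₙ] → V[g]`. Since the velocities converge
boundedly, the nonlinear energy terms `∫ fₙ Θ(V[fₙ])` converge as well, so the energy
constraints pass to the limit and the distance `∫₀ᵀ V` converges. Applied to a maximizing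
sequence (of everywhere-bounded representatives), this shows that `g` is optimal.
-/

open MeasureTheory Real Set

/-- The velocity of the runner: solution of `V' = f - V/τ`, `V 0 = 0`. -/
noncomputable def runnerV (τ : ℝ) (f : ℝ → ℝ) (t : ℝ) : ℝ :=
  ∫ u in (0:ℝ)..t, Real.exp (-(t - u) / τ) * f u

/-- The nutrition compartment: solution of `N' = s - d N - c₄ N`, `N 0 = 0`. -/
noncomputable def runnerN (d c₄ : ℝ) (s : ℝ → ℝ) (t : ℝ) : ℝ :=
  ∫ u in (0:ℝ)..t, Real.exp (-(d + c₄) * (t - u)) * s u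

/-- The fat energy of the runner. -/
noncomputable def runnerEF (τ a EF0 : ℝ) (glyc : ℝ → ℝ) (f : ℝ → ℝ) (t : ℝ) : ℝ :=
  EF0 - a * ∫ u in (0:ℝ)..t, f u * runnerV τ f u * (1 - glyc (runnerV τ f u))

/-- The glycogen energy of the runner. -/
noncomputable def runnerEG (τ a c₃ c₄ d EG0 : ℝ) (glyc s f : ℝ → ℝ) (t : ℝ) : ℝ :=
  EG0 + ∫ u in (0:ℝ)..t,
    (c₃ * c₄ * runnerN d c₄ s u - a * f u * runnerV τ f u * glyc (runnerV τ f u))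

/-- The admissible control set: measurable propulsion forces respecting the control
bounds a.e. on `[0,T]` whose fat and glycogen energies stay nonnegative on `[0,T]`. -/
def admissible (T τ fmax a c₃ c₄ d EF0 EG0 : ℝ) (glyc s : ℝ → ℝ) : Set (ℝ → ℝ) :=
  {f : ℝ → ℝ | Measurable f ∧
    (∀ᵐ t ∂(volume.restrict (Icc (0:ℝ) T)), 0 ≤ f t ∧ f t ≤ fmax) ∧
    (∀ t ∈ Icc (0:ℝ) T, 0 ≤ runnerEF τ a EF0 glyc f t) ∧
    (∀ t ∈ Icc (0:ℝ) T, 0 ≤ runnerEG τ a c₃ c₄ d EG0 glyc s f t)}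

open Filter Topology
open scoped NNReal

lemma exists_measurable_ae_eq_mem_Icc {μ : Measure ℝ} {f : ℝ → ℝ} {a b : ℝ} (hab : a ≤ b)
    (hf : Measurable f) (hfab : ∀ᵐ x ∂μ, f x ∈ Icc a b) :
    ∃ f', Measurable f' ∧ (∀ x, f' x ∈ Icc a b) ∧ f' =ᵐ[μ] f :=
  ⟨fun x => projIcc a b hab (f x), continuous_subtype_val.measurable.comp
    (continuous_projIcc.measurable.comp hf), fun x => (projIcc a b hab (f x)).2,
    hfab.mono fun _ hx => congrArg Subtype.val (projIcc_of_mem hab hx)⟩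

lemma abs_le_of_mem_Icc_zero {x M : ℝ} (h : x ∈ Icc 0 M) : |x| ≤ M :=
  (abs_of_nonneg h.1).trans_le h.2

lemma uIoc_zero_subset_Icc {t T : ℝ} (ht : t ∈ Icc 0 T) : uIoc 0 t ⊆ Icc 0 T := by
  rw [uIoc_of_le ht.1]
  exact fun x hx => ⟨hx.1.le, hx.2.trans ht.2⟩

lemma intervalIntegrable_of_abs_le {f : ℝ → ℝ} {a b C : ℝ} (hf : Measurable f)
    (hC : ∀ x ∈ uIcc a b, |f x| ≤ C) : IntervalIntegrable f volume a b :=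
  intervalIntegrable_const.mono_fun' hf.aestronglyMeasurable <|
    (ae_restrict_iff' measurableSet_uIoc).2 <|
      ae_of_all _ fun x hx => hC x (uIoc_subset_uIcc hx)

lemma lipschitzWith_primitive {f : ℝ → ℝ} {K : ℝ≥0} (hf : Measurable f)
    (hK : ∀ x, |f x| ≤ K) (a : ℝ) : LipschitzWith K fun x => ∫ u in a..x, f u := by
  refine LipschitzWith.of_dist_le_mul fun x y => ?_
  have hint (b : ℝ) : IntervalIntegrable f volume a b :=
    intervalIntegrable_of_abs_le hf fun u _ => hK u
  rw [Real.dist_eq, intervalIntegral.integral_interval_sub_left (hint x) (hint y),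
    ← Real.norm_eq_abs, Real.dist_eq]
  exact intervalIntegral.norm_integral_le_of_norm_le_const fun u _ => hK u

theorem exists_subseq_tendsto_of_lipschitzWith {K : ℝ≥0} {G : ℕ → ℝ → ℝ}
    (hG : ∀ n, LipschitzWith K (G n)) (hG0 : ∀ n, G n 0 = 0) :
    ∃ φ : ℕ → ℕ, StrictMono φ ∧ ∃ L : ℝ → ℝ, Tendsto (fun n => G (φ n)) atTop (𝓝 L) := by
  have hball (n : ℕ) (q : ℚ) : G n q ∈ Metric.closedBall 0 (K * dist (q : ℝ) 0) := by
    simpa only [Metric.mem_closedBall, hG0 n] using (hG n).dist_le_mul q 0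
  obtain ⟨y, φ, hφ, hy⟩ := CompactSpace.tendsto_subseq fun n (q : ℚ) =>
    (⟨G n q, hball n q⟩ : Metric.closedBall (0 : ℝ) (K * dist (q : ℝ) 0))
  have hrat (q : ℚ) : Tendsto (fun n => G (φ n) q) atTop (𝓝 (y q)) :=
    (continuous_subtype_val.tendsto _).comp (tendsto_pi_nhds.1 hy q)
  -- Equi-Lipschitz continuity transfers the Cauchy property from the rationals to every point.
  have hcauchy (x : ℝ) : CauchySeq fun n => G (φ n) x := by
    refine Metric.cauchySeq_iff.2 fun ε hε => ?_
    obtain ⟨q, hq⟩ := exists_rat_near x (show 0 < ε / (3 * (K + 1)) by positivity)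
    have hKq : K * dist x q < ε / 3 := by
      calc K * dist x q ≤ (K + 1) * |x - q| := by rw [Real.dist_eq]; gcongr; linarith
        _ < (K + 1) * (ε / (3 * (K + 1))) := by gcongr
        _ = ε / 3 := by field_simp
    obtain ⟨N, hN⟩ := Metric.cauchySeq_iff.1 (hrat q).cauchySeq (ε / 3) (by positivity)
    refine ⟨N, fun m hm n hn => ?_⟩
    calc dist (G (φ m) x) (G (φ n) x)
        ≤ dist (G (φ m) x) (G (φ m) q) + dist (G (φ m) q) (G (φ n) q)
          + dist (G (φ n) q) (G (φ n) x) := dist_triangle4 _ _ _ _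
      _ < ε / 3 + ε / 3 + ε / 3 := by
          gcongr
          · exact ((hG _).dist_le_mul x q).trans_lt hKq
          · exact hN m hm n hn
          · rw [dist_comm]; exact ((hG _).dist_le_mul x q).trans_lt hKq
      _ = ε := by ring
  choose L hL using fun x => cauchySeq_tendsto_of_complete (hcauchy x)
  exact ⟨φ, hφ, L, tendsto_pi_nhds.2 hL⟩

/-- For uniformly bounded sequences this is weak-* convergence in `L^∞`. -/
def TendstoPrimitive (f : ℕ → ℝ → ℝ) (g : ℝ → ℝ) : Prop :=
  ∀ x, Tendsto (fun n => ∫ u in (0 : ℝ)..x, f n u) atTop (𝓝 (∫ u in (0 : ℝ)..x, g u))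

theorem exists_subseq_tendstoPrimitive {M : ℝ} {f : ℕ → ℝ → ℝ} (hf : ∀ n, Measurable (f n))
    (hfM : ∀ n x, f n x ∈ Icc 0 M) :
    ∃ φ : ℕ → ℕ, StrictMono φ ∧
      ∃ g, Measurable g ∧ (∀ x, g x ∈ Icc 0 M) ∧ TendstoPrimitive (fun n => f (φ n)) g := by
  have hK : (M.toNNReal : ℝ) = M := Real.coe_toNNReal M ((hfM 0 0).1.trans (hfM 0 0).2)
  have hfK (n : ℕ) (x : ℝ) : |f n x| ≤ M.toNNReal := hK.symm ▸ abs_le_of_mem_Icc_zero (hfM n x)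
  have hint (n : ℕ) (a b : ℝ) : IntervalIntegrable (f n) volume a b :=
    intervalIntegrable_of_abs_le (hf n) fun x _ => hfK n x
  set G : ℕ → ℝ → ℝ := fun n x => ∫ u in (0 : ℝ)..x, f n u
  have hGmono (n : ℕ) : Monotone (G n) := fun x y hxy => by
    rw [← sub_nonneg, intervalIntegral.integral_interval_sub_left (hint n 0 y) (hint n 0 x)]
    exact intervalIntegral.integral_nonneg hxy fun u _ => (hfM n u).1
  have hGlip (n : ℕ) : LipschitzWith M.toNNReal (G n) := lipschitzWith_primitive (hf n) (hfK n) 0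
  obtain ⟨φ, hφ, L, hL⟩ :=
    exists_subseq_tendsto_of_lipschitzWith hGlip fun n => intervalIntegral.integral_same
  have hLlip : LipschitzWith M.toNNReal L := (isClosed_setOfPred_lipschitzWith _).mem_of_tendsto
    hL (Eventually.of_forall fun n => hGlip (φ n))
  have hLmono : Monotone L :=
    isClosed_monotone.mem_of_tendsto hL (Eventually.of_forall fun n => hGmono (φ n))
  have hLx (x : ℝ) : Tendsto (fun n => G (φ n) x) atTop (𝓝 (L x)) :=
    ((continuous_apply x).tendsto L).comp hL
  have hL0 : L 0 = 0 := tendsto_nhds_unique (hLx 0) (by simp [G])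
  refine ⟨φ, hφ, deriv L, measurable_deriv L, fun x => ⟨hLmono.deriv_nonneg, ?_⟩, fun x => ?_⟩
  · exact (le_abs_self _).trans <| (norm_deriv_le_of_lipschitz hLlip).trans_eq hK
  · rw [hLlip.lipschitzOnWith.absolutelyContinuousOnInterval.integral_deriv_eq_sub, hL0, sub_zero]
    exact hLx x

lemma TendstoPrimitive.tendsto_intervalIntegral {M a b : ℝ} {f : ℕ → ℝ → ℝ} {g : ℝ → ℝ}
    (hfg : TendstoPrimitive f g) (hf : ∀ n, Measurable (f n)) (hfM : ∀ n x, |f n x| ≤ M)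
    (hg : Measurable g) (hgM : ∀ x, |g x| ≤ M) :
    Tendsto (fun n => ∫ u in a..b, f n u) atTop (𝓝 (∫ u in a..b, g u)) := by
  have hsub {h : ℝ → ℝ} (hh : Measurable h) (hhM : ∀ x, |h x| ≤ M) :
      ∫ u in a..b, h u = (∫ u in (0 : ℝ)..b, h u) - ∫ u in (0 : ℝ)..a, h u :=
    (intervalIntegral.integral_interval_sub_left
      (intervalIntegrable_of_abs_le hh fun x _ => hhM x)
      (intervalIntegrable_of_abs_le hh fun x _ => hhM x)).symm
  simpa only [hsub (hf _) (hfM _), hsub hg hgM] using (hfg b).sub (hfg a)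

lemma tendsto_of_forall_approx {u : ℕ → ℝ} {l : ℝ}
    (h : ∀ ε > 0, ∃ (v : ℕ → ℝ) (m : ℝ),
      Tendsto v atTop (𝓝 m) ∧ (∀ n, |u n - v n| ≤ ε) ∧ |l - m| ≤ ε) :
    Tendsto u atTop (𝓝 l) := by
  refine Metric.tendsto_atTop.2 fun ε hε => ?_
  obtain ⟨v, m, hv, huv, hlm⟩ := h (ε / 4) (by positivity)
  obtain ⟨N, hN⟩ := Metric.tendsto_atTop.1 hv (ε / 4) (by positivity)
  refine ⟨N, fun n hn => ?_⟩
  have hvm := hN n hn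
  rw [Real.dist_eq] at hvm ⊢
  linarith [abs_sub_le (u n) (v n) l, abs_sub_le (v n) m l, abs_sub_comm l m, huv n]

lemma abs_integral_mul_sub_mul_integral_le {ψ h : ℝ → ℝ} {a b c ε M : ℝ} (hab : a ≤ b)
    (hψ : ContinuousOn ψ (Icc a b)) (hh : Measurable h) (hM : ∀ x, |h x| ≤ M)
    (hψc : ∀ x ∈ Icc a b, |ψ x - c| ≤ ε) :
    |(∫ u in a..b, ψ u * h u) - c * ∫ u in a..b, h u| ≤ ε * M * (b - a) := by
  have hint : IntervalIntegrable h volume a b := intervalIntegrable_of_abs_le hh fun x _ => hM x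
  rw [← intervalIntegral.integral_const_mul, ← intervalIntegral.integral_sub
    (hint.continuousOn_mul (by rwa [uIcc_of_le hab])) (hint.const_mul c),
    ← abs_of_nonneg (sub_nonneg.2 hab), ← Real.norm_eq_abs]
  refine intervalIntegral.norm_integral_le_of_norm_le_const fun x hx => ?_
  rw [uIoc_of_le hab] at hx
  have hψx := hψc x (Ioc_subset_Icc_self hx)
  rw [Real.norm_eq_abs, ← sub_mul, abs_mul]
  exact mul_le_mul hψx (hM x) (abs_nonneg _) ((abs_nonneg _).trans hψx)

lemma abs_integral_mul_sub_riemannSum_le {ψ h : ℝ → ℝ} {t ε M : ℝ} {k : ℕ} (hk : 0 < k)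
    (ht : 0 ≤ t) (hψ : Continuous ψ) (hh : Measurable h) (hM : ∀ x, |h x| ≤ M)
    (hosc : ∀ x ∈ Icc 0 t, ∀ y ∈ Icc 0 t, dist x y ≤ t / k → dist (ψ x) (ψ y) ≤ ε) :
    |(∫ u in (0 : ℝ)..t, ψ u * h u) -
      ∑ i ∈ Finset.range k, ψ (i * t / k) * ∫ u in i * t / k..(i + 1 : ℕ) * t / k, h u|
      ≤ ε * M * t := by
  set a : ℕ → ℝ := fun i => i * t / k
  have hk' : (0 : ℝ) < k := Nat.cast_pos.2 hk
  have hstep (i : ℕ) : a (i + 1) - a i = t / k := by simp only [a]; push_cast; ring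
  have hmem {i : ℕ} (hi : i ≤ k) : a i ∈ Icc 0 t :=
    ⟨by positivity, div_le_of_le_mul₀ hk'.le ht (by rw [mul_comm t]; gcongr)⟩
  have hsplit : ∫ u in (0 : ℝ)..t, ψ u * h u =
      ∑ i ∈ Finset.range k, ∫ u in a i..a (i + 1), ψ u * h u := by
    rw [intervalIntegral.sum_integral_adjacent_intervals fun i _ =>
      (intervalIntegrable_of_abs_le hh fun x _ => hM x).continuousOn_mul hψ.continuousOn]
    simp only [a, CharP.cast_eq_zero, zero_mul, zero_div]
    rw [mul_div_cancel_left₀ t hk'.ne']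
  rw [hsplit, ← Finset.sum_sub_distrib]
  calc _ ≤ ∑ i ∈ Finset.range k,
          |(∫ u in a i..a (i + 1), ψ u * h u) - ψ (a i) * ∫ u in a i..a (i + 1), h u| :=
        Finset.abs_sum_le_sum_abs _ _
    _ ≤ ∑ i ∈ Finset.range k, ε * M * (t / k) := Finset.sum_le_sum fun i hi => by
        have hi := Finset.mem_range.1 hi
        rw [← hstep i]
        refine abs_integral_mul_sub_mul_integral_le (by linarith [hstep i, div_nonneg ht hk'.le])
          hψ.continuousOn hh hM fun x hx => ?_
        have hx0 : x ∈ Icc 0 t := ⟨(hmem hi.le).1.trans hx.1, hx.2.trans (hmem hi).2⟩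
        rw [← Real.dist_eq]
        refine hosc x hx0 (a i) (hmem hi.le) ?_
        rw [Real.dist_eq, abs_of_nonneg (sub_nonneg.2 hx.1), ← hstep i]
        linarith [hx.2]
    _ = ε * M * t := by
        rw [Finset.sum_const, Finset.card_range, nsmul_eq_mul]; field_simp

theorem TendstoPrimitive.tendsto_integral_mul {M t : ℝ} {f : ℕ → ℝ → ℝ} {g ψ : ℝ → ℝ}
    (hfg : TendstoPrimitive f g) (hf : ∀ n, Measurable (f n)) (hfM : ∀ n x, |f n x| ≤ M)
    (hg : Measurable g) (hgM : ∀ x, |g x| ≤ M) (hψ : Continuous ψ) (ht : 0 ≤ t) :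
    Tendsto (fun n => ∫ u in (0 : ℝ)..t, ψ u * f n u) atTop
      (𝓝 (∫ u in (0 : ℝ)..t, ψ u * g u)) := by
  refine tendsto_of_forall_approx fun ε hε => ?_
  have hM : 0 ≤ M := (abs_nonneg _).trans (hgM 0)
  obtain ⟨δ, hδ, hψδ⟩ := Metric.uniformContinuousOn_iff_le.1
    (isCompact_Icc.uniformContinuousOn_of_continuous hψ.continuousOn) (ε / (M * t + 1))
    (by positivity)
  obtain ⟨k, hk⟩ := exists_nat_gt (t / δ)
  have hk0 : 0 < k := by exact_mod_cast (div_nonneg ht hδ.le).trans_lt hk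
  have hkδ : t / k ≤ δ := by
    rw [div_le_iff₀ (by exact_mod_cast hk0)]
    rw [div_lt_iff₀ hδ] at hk
    linarith
  have herr : ε / (M * t + 1) * M * t ≤ ε := by
    rw [div_mul_eq_mul_div, div_mul_eq_mul_div, div_le_iff₀ (by positivity)]
    nlinarith [mul_nonneg hM ht]
  have happrox {h : ℝ → ℝ} (hh : Measurable h) (hhM : ∀ x, |h x| ≤ M) :=
    (abs_integral_mul_sub_riemannSum_le hk0 ht hψ hh hhM fun x hx y hy hxy =>
      hψδ x hx y hy (hxy.trans hkδ)).trans herr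
  refine ⟨_, _, tendsto_finsetSum _ fun i _ => tendsto_const_nhds.mul
    (hfg.tendsto_intervalIntegral hf hfM hg hgM), fun n => happrox (hf n) (hfM n), happrox hg hgM⟩

lemma tendsto_intervalIntegral_of_abs_le {F : ℕ → ℝ → ℝ} {F₀ : ℝ → ℝ} {t K : ℝ} (ht : 0 ≤ t)
    (hF : ∀ n, Measurable (F n)) (hK : ∀ n, ∀ u ∈ Icc 0 t, |F n u| ≤ K)
    (hlim : ∀ u ∈ Icc 0 t, Tendsto (fun n => F n u) atTop (𝓝 (F₀ u))) :
    Tendsto (fun n => ∫ u in (0 : ℝ)..t, F n u) atTop (𝓝 (∫ u in (0 : ℝ)..t, F₀ u)) := by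
  have hIcc {u : ℝ} (hu : u ∈ uIoc 0 t) : u ∈ Icc 0 t := by
    rw [uIoc_of_le ht] at hu; exact Ioc_subset_Icc_self hu
  exact intervalIntegral.tendsto_integral_filter_of_dominated_convergence (fun _ => K)
    (Eventually.of_forall fun n => (hF n).aestronglyMeasurable)
    (Eventually.of_forall fun n => ae_of_all _ fun u hu => hK n u (hIcc hu))
    intervalIntegrable_const (ae_of_all _ fun u hu => hlim u (hIcc hu))

theorem TendstoPrimitive.tendsto_integral_mul_of_tendsto {M K t : ℝ} {f h : ℕ → ℝ → ℝ}
    {g k : ℝ → ℝ} (hfg : TendstoPrimitive f g) (hf : ∀ n, Measurable (f n))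
    (hfM : ∀ n x, |f n x| ≤ M) (hg : Measurable g) (hgM : ∀ x, |g x| ≤ M)
    (hh : ∀ n, Measurable (h n)) (hK : ∀ n, ∀ u ∈ Icc 0 t, |h n u| ≤ K) (hk : Continuous k)
    (hhk : ∀ u ∈ Icc 0 t, Tendsto (fun n => h n u) atTop (𝓝 (k u))) (ht : 0 ≤ t) :
    Tendsto (fun n => ∫ u in (0 : ℝ)..t, f n u * h n u) atTop
      (𝓝 (∫ u in (0 : ℝ)..t, g u * k u)) := by
  have hkK (u : ℝ) (hu : u ∈ Icc 0 t) : |k u| ≤ K :=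
    le_of_tendsto (hhk u hu).abs (Eventually.of_forall fun n => hK n u hu)
  have hdiffM (n : ℕ) (u : ℝ) (hu : u ∈ Icc 0 t) : |f n u * (h n u - k u)| ≤ M * (K + K) := by
    rw [abs_mul]
    exact mul_le_mul (hfM n u) ((abs_sub _ _).trans (add_le_add (hK n u hu) (hkK u hu)))
      (abs_nonneg _) ((abs_nonneg _).trans (hfM n u))
  have hdiff : Tendsto (fun n => ∫ u in (0 : ℝ)..t, f n u * (h n u - k u)) atTop (𝓝 0) := by
    have hpt (u : ℝ) (hu : u ∈ Icc 0 t) :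
        Tendsto (fun n => f n u * (h n u - k u)) atTop (𝓝 0) := by
      refine squeeze_zero_norm (fun n => ?_)
        (by simpa using ((hhk u hu).sub_const (k u)).abs.const_mul M)
      rw [Real.norm_eq_abs, abs_mul]
      exact mul_le_mul_of_nonneg_right (hfM n u) (abs_nonneg _)
    simpa using tendsto_intervalIntegral_of_abs_le ht
      (fun n => (hf n).mul ((hh n).sub hk.measurable)) hdiffM hpt
  have hsplit (n : ℕ) : (∫ u in (0 : ℝ)..t, f n u * (h n u - k u)) +
      ∫ u in (0 : ℝ)..t, f n u * k u = ∫ u in (0 : ℝ)..t, f n u * h n u := by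
    have hint : IntervalIntegrable (f n) volume 0 t :=
      intervalIntegrable_of_abs_le (hf n) fun x _ => hfM n x
    have hint' : IntervalIntegrable (fun u => f n u * (h n u - k u)) volume 0 t :=
      intervalIntegrable_of_abs_le ((hf n).mul ((hh n).sub hk.measurable))
        fun u hu => hdiffM n u (by rwa [uIcc_of_le ht] at hu)
    rw [← intervalIntegral.integral_add hint' (hint.mul_continuousOn hk.continuousOn)]
    exact intervalIntegral.integral_congr fun u _ => by ring
  have hweak := hfg.tendsto_integral_mul hf hfM hg hgM hk ht
  simp only [mul_comm (k _)] at hweak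
  simpa only [zero_add, hsplit] using hdiff.add hweak

section Runner

variable {τ M T t : ℝ} {f g : ℝ → ℝ}

lemma runnerV_nonneg (hf : ∀ x, 0 ≤ f x) (ht : 0 ≤ t) : 0 ≤ runnerV τ f t :=
  intervalIntegral.integral_nonneg ht fun u _ => mul_nonneg (exp_pos _).le (hf u)

lemma runnerV_mem_Icc (hτ : 0 < τ) (hf : Measurable f) (hfM : ∀ x, f x ∈ Icc 0 M) {u : ℝ}
    (hu : u ∈ Icc 0 t) : runnerV τ f u ∈ Icc 0 (M * t) := by
  refine ⟨runnerV_nonneg (fun x => (hfM x).1) hu.1, ?_⟩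
  have hint : IntervalIntegrable f volume 0 u :=
    intervalIntegrable_of_abs_le hf fun x _ => abs_le_of_mem_Icc_zero (hfM x)
  calc runnerV τ f u ≤ ∫ _ in (0 : ℝ)..u, M := by
        refine intervalIntegral.integral_mono_on hu.1
          (hint.continuousOn_mul (by fun_prop)) intervalIntegrable_const fun x hx => ?_
        have hexp : rexp (-(u - x) / τ) ≤ 1 :=
          exp_le_one_iff.2 (div_nonpos_of_nonpos_of_nonneg (by linarith [hx.2]) hτ.le)
        nlinarith [(hfM x).1, (hfM x).2, exp_pos (-(u - x) / τ)]
    _ = M * u := by rw [intervalIntegral.integral_const, smul_eq_mul, sub_zero, mul_comm]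
    _ ≤ M * t := mul_le_mul_of_nonneg_left hu.2 ((hfM 0).1.trans (hfM 0).2)

lemma continuous_runnerV (hf : Measurable f) (hfM : ∀ x, |f x| ≤ M) :
    Continuous (runnerV τ f) := by
  have hV : runnerV τ f = fun t => rexp (-t / τ) * ∫ u in (0 : ℝ)..t, rexp (u / τ) * f u := by
    funext t
    rw [runnerV, ← intervalIntegral.integral_const_mul]
    refine intervalIntegral.integral_congr fun u _ => ?_
    rw [← mul_assoc, ← exp_add]
    ring_nf
  rw [hV]
  exact (by fun_prop : Continuous fun t : ℝ => rexp (-t / τ)).mul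
    (intervalIntegral.continuous_primitive (fun a b =>
      (intervalIntegrable_of_abs_le hf fun x _ => hfM x).continuousOn_mul (by fun_prop)) 0)

lemma runnerV_congr_ae (hfg : f =ᵐ[volume.restrict (Icc 0 T)] g) (ht : t ∈ Icc 0 T) :
    runnerV τ f t = runnerV τ g t :=
  intervalIntegral.integral_congr_ae <| by
    filter_upwards [(ae_restrict_iff' measurableSet_Icc).1 hfg] with x hx hxt
    rw [hx (uIoc_zero_subset_Icc ht hxt)]

lemma runnerN_eq_runnerV (d c₄ : ℝ) (s : ℝ → ℝ) : runnerN d c₄ s = runnerV (d + c₄)⁻¹ s := by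
  funext t
  refine intervalIntegral.integral_congr fun u _ => ?_
  rw [div_inv_eq_mul]
  ring_nf

lemma runnerEF_congr_ae {a EF0 : ℝ} {glyc : ℝ → ℝ} (hfg : f =ᵐ[volume.restrict (Icc 0 T)] g)
    (ht : t ∈ Icc 0 T) : runnerEF τ a EF0 glyc f t = runnerEF τ a EF0 glyc g t := by
  unfold runnerEF
  congr 2
  refine intervalIntegral.integral_congr_ae ?_
  filter_upwards [(ae_restrict_iff' measurableSet_Icc).1 hfg] with x hx hxt
  have hxT := uIoc_zero_subset_Icc ht hxt
  rw [hx hxT, runnerV_congr_ae hfg hxT]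

lemma runnerEG_congr_ae {a c₃ c₄ d EG0 : ℝ} {glyc s : ℝ → ℝ}
    (hfg : f =ᵐ[volume.restrict (Icc 0 T)] g) (ht : t ∈ Icc 0 T) :
    runnerEG τ a c₃ c₄ d EG0 glyc s f t = runnerEG τ a c₃ c₄ d EG0 glyc s g t := by
  unfold runnerEG
  congr 1
  refine intervalIntegral.integral_congr_ae ?_
  filter_upwards [(ae_restrict_iff' measurableSet_Icc).1 hfg] with x hx hxt
  have hxT := uIoc_zero_subset_Icc ht hxt
  rw [hx hxT, runnerV_congr_ae hfg hxT]

lemma integral_runnerV_le (hτ : 0 < τ) (hf : Measurable f) (hfM : ∀ x, f x ∈ Icc 0 M)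
    (hT : 0 ≤ T) : ∫ t in (0 : ℝ)..T, runnerV τ f t ≤ M * T * T :=
  calc ∫ t in (0 : ℝ)..T, runnerV τ f t ≤ ∫ _ in (0 : ℝ)..T, M * T :=
        intervalIntegral.integral_mono_on hT ((continuous_runnerV hf fun x =>
          abs_le_of_mem_Icc_zero (hfM x)).intervalIntegrable _ _) intervalIntegrable_const
          fun _ ht => (runnerV_mem_Icc hτ hf hfM ht).2
    _ = M * T * T := by rw [intervalIntegral.integral_const, smul_eq_mul, sub_zero, mul_comm]

variable {f : ℕ → ℝ → ℝ}

theorem TendstoPrimitive.tendsto_runnerV (hfg : TendstoPrimitive f g)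
    (hf : ∀ n, Measurable (f n)) (hfM : ∀ n x, |f n x| ≤ M) (hg : Measurable g)
    (hgM : ∀ x, |g x| ≤ M) (ht : 0 ≤ t) :
    Tendsto (fun n => runnerV τ (f n) t) atTop (𝓝 (runnerV τ g t)) :=
  hfg.tendsto_integral_mul hf hfM hg hgM (by fun_prop) ht

theorem TendstoPrimitive.tendsto_integral_runnerV (hτ : 0 < τ) (hfg : TendstoPrimitive f g)
    (hf : ∀ n, Measurable (f n)) (hfM : ∀ n x, f n x ∈ Icc 0 M) (hg : Measurable g)
    (hgM : ∀ x, g x ∈ Icc 0 M) (hT : 0 ≤ T) :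
    Tendsto (fun n => ∫ t in (0 : ℝ)..T, runnerV τ (f n) t) atTop
      (𝓝 (∫ t in (0 : ℝ)..T, runnerV τ g t)) :=
  tendsto_intervalIntegral_of_abs_le hT
    (fun n => (continuous_runnerV (hf n) fun x => abs_le_of_mem_Icc_zero (hfM n x)).measurable)
    (fun n _ hu => abs_le_of_mem_Icc_zero (runnerV_mem_Icc hτ (hf n) (hfM n) hu))
    fun _ hu => hfg.tendsto_runnerV hf (fun n x => abs_le_of_mem_Icc_zero (hfM n x)) hg
      (fun x => abs_le_of_mem_Icc_zero (hgM x)) hu.1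

theorem TendstoPrimitive.tendsto_integral_mul_comp_runnerV {Θ : ℝ → ℝ} (hτ : 0 < τ)
    (hfg : TendstoPrimitive f g) (hf : ∀ n, Measurable (f n)) (hfM : ∀ n x, f n x ∈ Icc 0 M)
    (hg : Measurable g) (hgM : ∀ x, g x ∈ Icc 0 M) (hΘ : Continuous Θ) (ht : 0 ≤ t) :
    Tendsto (fun n => ∫ u in (0 : ℝ)..t, f n u * Θ (runnerV τ (f n) u)) atTop
      (𝓝 (∫ u in (0 : ℝ)..t, g u * Θ (runnerV τ g u))) := by
  have hfM' (n : ℕ) (x : ℝ) := abs_le_of_mem_Icc_zero (hfM n x)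
  have hgM' (x : ℝ) := abs_le_of_mem_Icc_zero (hgM x)
  obtain ⟨K, hK⟩ :=
    isCompact_Icc.exists_bound_of_continuousOn (hΘ.continuousOn (s := Icc 0 (M * t)))
  exact hfg.tendsto_integral_mul_of_tendsto hf hfM' hg hgM'
    (fun n => (hΘ.comp (continuous_runnerV (hf n) (hfM' n))).measurable)
    (fun n _ hu => hK _ (runnerV_mem_Icc hτ (hf n) (hfM n) hu))
    (hΘ.comp (continuous_runnerV hg hgM'))
    (fun u hu => (hΘ.tendsto _).comp (hfg.tendsto_runnerV hf hfM' hg hgM' hu.1)) ht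

theorem TendstoPrimitive.tendsto_runnerEF {a EF0 : ℝ} {glyc : ℝ → ℝ} (hτ : 0 < τ)
    (hfg : TendstoPrimitive f g) (hf : ∀ n, Measurable (f n)) (hfM : ∀ n x, f n x ∈ Icc 0 M)
    (hg : Measurable g) (hgM : ∀ x, g x ∈ Icc 0 M) (hglyc : Continuous glyc) (ht : 0 ≤ t) :
    Tendsto (fun n => runnerEF τ a EF0 glyc (f n) t) atTop (𝓝 (runnerEF τ a EF0 glyc g t)) := by
  have h := hfg.tendsto_integral_mul_comp_runnerV (Θ := fun v => v * (1 - glyc v)) hτ hf hfM hg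
    hgM (by fun_prop) ht
  simp only [← mul_assoc] at h
  exact tendsto_const_nhds.sub (tendsto_const_nhds.mul h)

theorem TendstoPrimitive.tendsto_runnerEG {a c₃ c₄ d EG0 : ℝ} {glyc s : ℝ → ℝ} (hτ : 0 < τ)
    (hfg : TendstoPrimitive f g) (hf : ∀ n, Measurable (f n)) (hfM : ∀ n x, f n x ∈ Icc 0 M)
    (hg : Measurable g) (hgM : ∀ x, g x ∈ Icc 0 M) (hglyc : Continuous glyc)
    (hN : IntervalIntegrable (runnerN d c₄ s) volume 0 t) (ht : 0 ≤ t) :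
    Tendsto (fun n => runnerEG τ a c₃ c₄ d EG0 glyc s (f n) t) atTop
      (𝓝 (runnerEG τ a c₃ c₄ d EG0 glyc s g t)) := by
  have hsplit {h : ℝ → ℝ} (hh : Measurable h) (hhM : ∀ x, h x ∈ Icc 0 M) :
      runnerEG τ a c₃ c₄ d EG0 glyc s h t = EG0 + (c₃ * c₄ * (∫ u in (0 : ℝ)..t, runnerN d c₄ s u)
        - a * ∫ u in (0 : ℝ)..t, h u * (runnerV τ h u * glyc (runnerV τ h u))) := by
    have hV := continuous_runnerV (τ := τ) hh fun x => abs_le_of_mem_Icc_zero (hhM x)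
    have hint : IntervalIntegrable
        (fun u => h u * (runnerV τ h u * glyc (runnerV τ h u))) volume 0 t :=
      (intervalIntegrable_of_abs_le hh fun x _ => abs_le_of_mem_Icc_zero (hhM x)).mul_continuousOn
        (hV.mul (hglyc.comp hV)).continuousOn
    rw [runnerEG, ← intervalIntegral.integral_const_mul, ← intervalIntegral.integral_const_mul,
      ← intervalIntegral.integral_sub (hN.const_mul _) (hint.const_mul a)]
    simp only [mul_assoc]
  simp only [hsplit (hf _) (hfM _), hsplit hg hgM]
  exact tendsto_const_nhds.add (tendsto_const_nhds.sub (tendsto_const_nhds.mul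
    (hfg.tendsto_integral_mul_comp_runnerV (Θ := fun v => v * glyc v) hτ hf hfM hg hgM
      (by fun_prop) ht)))

end Runner

section Admissible

variable {T τ fmax a c₃ c₄ d EF0 EG0 : ℝ} {glyc s : ℝ → ℝ}

lemma mem_admissible_of_ae_eq {f g : ℝ → ℝ}
    (hf : f ∈ admissible T τ fmax a c₃ c₄ d EF0 EG0 glyc s) (hg : Measurable g)
    (hgf : g =ᵐ[volume.restrict (Icc 0 T)] f) :
    g ∈ admissible T τ fmax a c₃ c₄ d EF0 EG0 glyc s := by
  refine ⟨hg, ?_, fun t ht => ?_, fun t ht => ?_⟩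
  · filter_upwards [hf.2.1, hgf] with x hx hgx
    rwa [hgx]
  · rw [runnerEF_congr_ae hgf ht]; exact hf.2.2.1 t ht
  · rw [runnerEG_congr_ae hgf ht]; exact hf.2.2.2 t ht

lemma exists_bounded_mem_admissible {f : ℝ → ℝ} (hT : 0 ≤ T) (hfmax : 0 ≤ fmax)
    (hf : f ∈ admissible T τ fmax a c₃ c₄ d EF0 EG0 glyc s) :
    ∃ f', Measurable f' ∧ (∀ x, f' x ∈ Icc 0 fmax) ∧
      f' ∈ admissible T τ fmax a c₃ c₄ d EF0 EG0 glyc s ∧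
      ∫ t in (0 : ℝ)..T, runnerV τ f' t = ∫ t in (0 : ℝ)..T, runnerV τ f t := by
  obtain ⟨f', hf', hf'M, hf'f⟩ := exists_measurable_ae_eq_mem_Icc hfmax hf.1 hf.2.1
  refine ⟨f', hf', hf'M, mem_admissible_of_ae_eq hf hf' hf'f,
    intervalIntegral.integral_congr fun t ht => runnerV_congr_ae hf'f ?_⟩
  rwa [uIcc_of_le hT] at ht

lemma zero_mem_admissible (hfmax : 0 ≤ fmax) (hc₃ : 0 ≤ c₃) (hc₄ : 0 ≤ c₄) (hEF0 : 0 ≤ EF0)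
    (hEG0 : 0 ≤ EG0) (hN : ∀ u ∈ Icc 0 T, 0 ≤ runnerN d c₄ s u) :
    (fun _ => 0) ∈ admissible T τ fmax a c₃ c₄ d EF0 EG0 glyc s := by
  refine ⟨measurable_const, ae_of_all _ fun _ => ⟨le_rfl, hfmax⟩, fun t _ => ?_, fun t ht => ?_⟩
  · simpa [runnerEF] using hEF0
  · simp only [runnerEG, mul_zero, zero_mul, sub_zero]
    exact add_nonneg hEG0 (intervalIntegral.integral_nonneg ht.1 fun u hu =>
      mul_nonneg (mul_nonneg hc₃ hc₄) (hN u ⟨hu.1, hu.2.trans ht.2⟩))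

theorem mem_admissible_of_tendstoPrimitive {f : ℕ → ℝ → ℝ} {g : ℝ → ℝ} (hτ : 0 < τ)
    (hglyc : Continuous glyc) (hN : ContinuousOn (runnerN d c₄ s) (Icc 0 T))
    (hf : ∀ n, Measurable (f n)) (hfM : ∀ n x, f n x ∈ Icc 0 fmax)
    (hfA : ∀ n, f n ∈ admissible T τ fmax a c₃ c₄ d EF0 EG0 glyc s)
    (hg : Measurable g) (hgM : ∀ x, g x ∈ Icc 0 fmax) (hfg : TendstoPrimitive f g) :
    g ∈ admissible T τ fmax a c₃ c₄ d EF0 EG0 glyc s := by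
  refine ⟨hg, ae_of_all _ hgM, fun t ht => ?_, fun t ht => ?_⟩
  · exact ge_of_tendsto' (hfg.tendsto_runnerEF hτ hf hfM hg hgM hglyc ht.1)
      fun n => (hfA n).2.2.1 t ht
  · have hNt : IntervalIntegrable (runnerN d c₄ s) volume 0 t :=
      (hN.mono (by rw [uIcc_of_le ht.1]; exact Icc_subset_Icc_right ht.2)).intervalIntegrable
    exact ge_of_tendsto' (hfg.tendsto_runnerEG hτ hf hfM hg hgM hglyc hNt ht.1)
      fun n => (hfA n).2.2.2 t ht

end Admissible

theorem exists_optimal_control_general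
    (T τ fmax a c₃ c₄ d smax EF0 EG0 : ℝ)
    (hT : 0 < T) (hτ : 0 < τ) (hfmax : 0 < fmax)
    (hc₃ : 0 < c₃) (hc₄ : 0 < c₄) (hsmax : 0 < smax)
    (hEF0 : 0 ≤ EF0) (hEG0 : 0 ≤ EG0)
    (s : ℝ → ℝ) (hs_meas : Measurable s)
    (hs_bds : ∀ᵐ t ∂(volume.restrict (Icc (0:ℝ) T)), 0 ≤ s t ∧ s t ≤ smax)
    (glyc : ℝ → ℝ) (hglyc_cont : Continuous glyc) :
    ∃ fstar ∈ admissible T τ fmax a c₃ c₄ d EF0 EG0 glyc s,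
      ∀ f ∈ admissible T τ fmax a c₃ c₄ d EF0 EG0 glyc s,
        (∫ t in (0:ℝ)..T, runnerV τ f t) ≤ ∫ t in (0:ℝ)..T, runnerV τ fstar t := by
  set A := admissible T τ fmax a c₃ c₄ d EF0 EG0 glyc s
  set J : (ℝ → ℝ) → ℝ := fun f => ∫ t in (0:ℝ)..T, runnerV τ f t
  obtain ⟨s', hs', hs'M, hs's⟩ := exists_measurable_ae_eq_mem_Icc hsmax.le hs_meas hs_bds
  have hN : EqOn (runnerN d c₄ s) (runnerV (d + c₄)⁻¹ s') (Icc 0 T) := fun u hu => by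
    rw [runnerN_eq_runnerV, runnerV_congr_ae hs's.symm hu]
  have hA0 : (fun _ => 0) ∈ A := zero_mem_admissible hfmax.le hc₃.le hc₄.le hEF0 hEG0
    fun u hu => (hN hu).symm ▸ runnerV_nonneg (fun x => (hs'M x).1) hu.1
  have hbdd : BddAbove (J '' A) := by
    refine ⟨fmax * T * T, forall_mem_image.2 fun f hf => ?_⟩
    obtain ⟨f', hf', hf'M, -, hJ⟩ := exists_bounded_mem_admissible hT.le hfmax.le hf
    exact hJ.symm.trans_le (integral_runnerV_le hτ hf' hf'M hT.le)
  obtain ⟨u, -, hu, huJ⟩ := exists_seq_tendsto_sSup ⟨_, mem_image_of_mem J hA0⟩ hbdd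
  choose f₀ hf₀A hf₀J using huJ
  choose f hf hfM hfA hfJ using fun n => exists_bounded_mem_admissible hT.le hfmax.le (hf₀A n)
  obtain ⟨φ, hφ, g, hg, hgM, hfg⟩ := exists_subseq_tendstoPrimitive hf hfM
  have hgA : g ∈ A := mem_admissible_of_tendstoPrimitive hτ hglyc_cont
    ((continuous_runnerV hs' fun x => abs_le_of_mem_Icc_zero (hs'M x)).continuousOn.congr hN)
    (fun n => hf (φ n)) (fun n => hfM (φ n)) (fun n => hfA (φ n)) hg hgM hfg
  have hJg : J g = sSup (J '' A) := tendsto_nhds_unique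
    (hfg.tendsto_integral_runnerV hτ (fun n => hf (φ n)) (fun n => hfM (φ n)) hg hgM hT.le)
    (by simpa [J, hfJ, hf₀J, Function.comp_def] using hu.comp hφ.tendsto_atTop)
  exact ⟨g, hgA, fun f hf => (le_csSup hbdd (mem_image_of_mem J hf)).trans_eq hJg.symm⟩

/-- Existence of an optimal propulsion force for the maximum-distance runner problem. -/
theorem exists_optimal_control
    (T τ fmax a c₃ c₄ d smax EF0 EG0 : ℝ)
    (hT : 0 < T) (hτ : 0 < τ) (hfmax : 0 < fmax) (ha : 0 < a)
    (hc₃ : 0 < c₃) (hc₄ : 0 < c₄) (hd : 0 < d) (hsmax : 0 < smax)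
    (hEF0 : 0 ≤ EF0) (hEG0 : 0 ≤ EG0)
    (s : ℝ → ℝ) (hs_meas : Measurable s)
    (hs_bds : ∀ᵐ t ∂(volume.restrict (Icc (0:ℝ) T)), 0 ≤ s t ∧ s t ≤ smax)
    (glyc : ℝ → ℝ) (hglyc_cont : Continuous glyc)
    (hglyc_bds : ∀ v, 0 ≤ glyc v ∧ glyc v ≤ 1) :
    ∃ fstar ∈ admissible T τ fmax a c₃ c₄ d EF0 EG0 glyc s,
      ∀ f ∈ admissible T τ fmax a c₃ c₄ d EF0 EG0 glyc s,
        (∫ t in (0:ℝ)..T, runnerV τ f t) ≤ ∫ t in (0:ℝ)..T, runnerV τ fstar t :=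
  exists_optimal_control_general T τ fmax a c₃ c₄ d smax EF0 EG0 hT hτ hfmax hc₃ hc₄ hsmax hEF0 hEG0
    s hs_meas hs_bds glyc hglyc_cont
end

section
/- Let T > 0, τ > 0, f_max > 0. Let (fⁿ) be a sequence of measurable functions on [0,T] with 0 ≤ fⁿ(t) ≤ f_max a.e. for all n, and suppose fⁿ converges weakly in L²(0,T) to f* (i.e., ∫₀^T fⁿ g → ∫₀^T f* g for all g ∈ L²(0,T)). Then the corresponding velocities converge uniformly: sup_{t ∈ [0,T]} |V[fⁿ](t) - V[f*](t)| → 0 as n → ∞. -/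
open MeasureTheory Real Set Filter

/-!
Testing the weak convergence against the bounded kernel `u ↦ 1_{(0,t]}(u) e^{-(t-u)/τ}` gives
pointwise convergence of the velocities. Velocities of controls bounded by `f_max` are uniformly
Lipschitz on `[0,T]`, with constant `f_max (1 + T/τ)`, so the family is equicontinuous, and on a
compact set pointwise convergence of an equicontinuous family is uniform (Arzelà–Ascoli).
-/

open Topology
open scoped Interval

theorem EquicontinuousOn.tendstoUniformlyOn_of_tendsto {ι X α : Type*} [TopologicalSpace X]
    [UniformSpace α] {F : ι → X → α} {f : X → α} {p : Filter ι} {K : Set X}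
    (hK : IsCompact K) (hF : EquicontinuousOn F K) (h : ∀ x ∈ K, Tendsto (F · x) p (𝓝 (f x))) :
    TendstoUniformlyOn F f p K := by
  have hunif := (EquicontinuousOn.tendsto_uniformOnFun_iff_pi' (𝔖 := {K}) (by simpa) (by simpa)
    p f).2 (by
      rw [sUnion_singleton, tendsto_pi_nhds]
      rintro ⟨x, hx⟩
      exact h x hx)
  exact UniformOnFun.tendsto_iff_tendstoUniformlyOn.1 hunif K rfl

theorem abs_exp_neg_div_sub_exp_neg_div_le {τ x y : ℝ} (hτ : 0 < τ) (hx : 0 ≤ x) (hxy : x ≤ y) :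
    |exp (-y / τ) - exp (-x / τ)| ≤ (y - x) / τ := by
  have hdecay : exp (-y / τ) = exp (-x / τ) * exp (-((y - x) / τ)) := by
    rw [← exp_add]; ring_nf
  have hx1 : exp (-x / τ) ≤ 1 :=
    exp_le_one_iff.2 (div_nonpos_of_nonpos_of_nonneg (by linarith) hτ.le)
  have hyx : exp (-((y - x) / τ)) ≤ 1 :=
    exp_le_one_iff.2 (neg_nonpos.2 (div_nonneg (by linarith) hτ.le))
  rw [abs_sub_comm, abs_of_nonneg (by rw [hdecay]; nlinarith [exp_pos (-x / τ)]), hdecay]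
  nlinarith [one_sub_le_exp_neg ((y - x) / τ), exp_pos (-x / τ), exp_pos (-((y - x) / τ))]

section Velocity

variable {τ T M : ℝ} {f : ℝ → ℝ}

theorem intervalIntegrable_exp_mul (hf : IntegrableOn f (Icc 0 T)) (r : ℝ) {a b : ℝ}
    (ha : a ∈ Icc 0 T) (hb : b ∈ Icc 0 T) :
    IntervalIntegrable (fun u => exp (-(r - u) / τ) * f u) volume a b :=
  ((hf.continuousOn_mul (by fun_prop) isCompact_Icc).mono_set
    (uIcc_subset_Icc ha hb)).intervalIntegrable

theorem runnerV_sub_runnerV (hf : IntegrableOn f (Icc 0 T)) {s t : ℝ} (hs : s ∈ Icc 0 T)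
    (ht : t ∈ Icc 0 T) :
    runnerV τ f t - runnerV τ f s =
      (∫ u in 0..s, (exp (-(t - u) / τ) - exp (-(s - u) / τ)) * f u)
        + ∫ u in s..t, exp (-(t - u) / τ) * f u := by
  have h0 : (0 : ℝ) ∈ Icc 0 T := ⟨le_rfl, hs.1.trans hs.2⟩
  simp_rw [runnerV, sub_mul]
  rw [intervalIntegral.integral_sub (intervalIntegrable_exp_mul hf t h0 hs)
      (intervalIntegrable_exp_mul hf s h0 hs),
    ← intervalIntegral.integral_add_adjacent_intervals (intervalIntegrable_exp_mul hf t h0 hs)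
      (intervalIntegrable_exp_mul hf t hs ht)]
  ring

theorem abs_runnerV_sub_runnerV_le (hτ : 0 < τ) (hM : 0 ≤ M) (hf : IntegrableOn f (Icc 0 T))
    (hfM : ∀ᵐ u ∂volume.restrict (Icc 0 T), |f u| ≤ M) {s t : ℝ} (hs : s ∈ Icc 0 T)
    (ht : t ∈ Icc 0 T) (hst : s ≤ t) :
    |runnerV τ f t - runnerV τ f s| ≤ M * (1 + T / τ) * (t - s) := by
  rw [ae_restrict_iff' measurableSet_Icc] at hfM
  have hpast : ‖∫ u in 0..s, (exp (-(t - u) / τ) - exp (-(s - u) / τ)) * f u‖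
      ≤ (t - s) / τ * M * |s - 0| := by
    refine intervalIntegral.norm_integral_le_of_norm_le_const_ae ?_
    filter_upwards [hfM] with u hu hu0s
    rw [uIoc_of_le hs.1] at hu0s
    have hker := abs_exp_neg_div_sub_exp_neg_div_le hτ (sub_nonneg.2 hu0s.2)
      (sub_le_sub_right hst u)
    rw [sub_sub_sub_cancel_right] at hker
    rw [norm_mul, Real.norm_eq_abs, Real.norm_eq_abs]
    exact mul_le_mul hker (hu ⟨hu0s.1.le, hu0s.2.trans hs.2⟩) (abs_nonneg _)
      (div_nonneg (sub_nonneg.2 hst) hτ.le)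
  have hrecent : ‖∫ u in s..t, exp (-(t - u) / τ) * f u‖ ≤ M * |t - s| := by
    refine intervalIntegral.norm_integral_le_of_norm_le_const_ae ?_
    filter_upwards [hfM] with u hu hust
    rw [uIoc_of_le hst] at hust
    have hker : exp (-(t - u) / τ) ≤ 1 :=
      exp_le_one_iff.2 (div_nonpos_of_nonpos_of_nonneg (by linarith [hust.2]) hτ.le)
    rw [norm_mul, Real.norm_of_nonneg (exp_pos _).le, Real.norm_eq_abs]
    exact (mul_le_of_le_one_left (abs_nonneg _) hker).trans
      (hu ⟨hs.1.trans hust.1.le, hust.2.trans ht.2⟩)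
  rw [sub_zero, abs_of_nonneg hs.1] at hpast
  rw [abs_of_nonneg (sub_nonneg.2 hst)] at hrecent
  calc |runnerV τ f t - runnerV τ f s|
      ≤ (t - s) / τ * M * s + M * (t - s) := by
        rw [runnerV_sub_runnerV hf hs ht, ← Real.norm_eq_abs]
        exact (norm_add_le _ _).trans (add_le_add hpast hrecent)
    _ ≤ (t - s) / τ * M * T + M * (t - s) := by gcongr; exact hs.2
    _ = M * (1 + T / τ) * (t - s) := by ring

theorem lipschitzOnWith_runnerV (hτ : 0 < τ) (hM : 0 ≤ M) (hf : IntegrableOn f (Icc 0 T))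
    (hfM : ∀ᵐ u ∂volume.restrict (Icc 0 T), |f u| ≤ M) :
    LipschitzOnWith (M * (1 + T / τ)).toNNReal (runnerV τ f) (Icc 0 T) := by
  refine LipschitzOnWith.of_dist_le_mul fun t ht s hs => ?_
  refine le_trans ?_ (mul_le_mul_of_nonneg_right (le_coe_toNNReal _) dist_nonneg)
  rw [Real.dist_eq, Real.dist_eq]
  rcases le_total s t with hst | hts
  · rw [abs_of_nonneg (sub_nonneg.2 hst)]
    exact abs_runnerV_sub_runnerV_le hτ hM hf hfM hs ht hst
  · rw [abs_sub_comm, abs_sub_comm t, abs_of_nonneg (sub_nonneg.2 hts)]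
    exact abs_runnerV_sub_runnerV_le hτ hM hf hfM ht hs hts

theorem memLp_indicator_exp (hτ : 0 < τ) (t : ℝ) {p : ENNReal} {μ : Measure ℝ}
    [IsFiniteMeasure μ] : MemLp ((Ioc 0 t).indicator fun u => exp (-(t - u) / τ)) p μ := by
  refine MemLp.of_bound ((by fun_prop : Measurable fun u => exp (-(t - u) / τ)).indicator
    measurableSet_Ioc).aestronglyMeasurable 1 (Eventually.of_forall fun u => ?_)
  by_cases hu : u ∈ Ioc 0 t
  · rw [indicator_of_mem hu, Real.norm_of_nonneg (exp_pos _).le, exp_le_one_iff]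
    exact div_nonpos_of_nonpos_of_nonneg (by linarith [hu.2]) hτ.le
  · simp [indicator_of_notMem hu]

theorem intervalIntegral_mul_indicator_exp_eq_runnerV {t : ℝ} (ht : t ∈ Icc 0 T) :
    ∫ u in 0..T, f u * (Ioc 0 t).indicator (fun u => exp (-(t - u) / τ)) u = runnerV τ f t := by
  simp_rw [mul_comm (f _), ← indicator_mul_left]
  rw [intervalIntegral.integral_of_le (ht.1.trans ht.2), runnerV,
    intervalIntegral.integral_of_le ht.1, integral_indicator measurableSet_Ioc,
    Measure.restrict_restrict measurableSet_Ioc,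
    inter_eq_self_of_subset_left (Ioc_subset_Ioc_right ht.2)]

end Velocity

theorem velocities_converge_uniformly_of_weak_convergence_general
    (T τ fmax : ℝ) (hτ : 0 < τ) (hfmax : 0 < fmax)
    (fn : ℕ → ℝ → ℝ) (fstar : ℝ → ℝ)
    (hfn_meas : ∀ n, Measurable (fn n))
    (hfn_bds : ∀ n, ∀ᵐ t ∂(volume.restrict (Icc (0:ℝ) T)), 0 ≤ fn n t ∧ fn n t ≤ fmax)
    (hweak : ∀ g : ℝ → ℝ, MemLp g 2 (volume.restrict (Icc (0:ℝ) T)) →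
      Tendsto (fun n => ∫ u in (0:ℝ)..T, fn n u * g u) atTop
        (nhds (∫ u in (0:ℝ)..T, fstar u * g u))) :
    TendstoUniformlyOn (fun n t => runnerV τ (fn n) t) (runnerV τ fstar) atTop
      (Icc (0:ℝ) T) := by
  have hbound : ∀ n, ∀ᵐ u ∂volume.restrict (Icc 0 T), |fn n u| ≤ fmax := fun n => by
    filter_upwards [hfn_bds n] with u hu
    exact abs_le.2 ⟨by linarith [hu.1], hu.2⟩
  have hint : ∀ n, IntegrableOn (fn n) (Icc 0 T) := fun n =>
    .of_bound measure_Icc_lt_top (hfn_meas n).aestronglyMeasurable fmax (hbound n)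
  refine EquicontinuousOn.tendstoUniformlyOn_of_tendsto isCompact_Icc ?_ fun t ht => ?_
  · exact (LipschitzOnWith.uniformEquicontinuousOn _ _ fun n =>
      lipschitzOnWith_runnerV hτ hfmax.le (hint n) (hbound n)).equicontinuousOn
  · simp_rw [← intervalIntegral_mul_indicator_exp_eq_runnerV ht]
    exact hweak _ (memLp_indicator_exp hτ t)

theorem velocities_converge_uniformly_of_weak_convergence
    (T τ fmax : ℝ) (hT : 0 < T) (hτ : 0 < τ) (hfmax : 0 < fmax)
    (fn : ℕ → ℝ → ℝ) (fstar : ℝ → ℝ)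
    (hfn_meas : ∀ n, Measurable (fn n))
    (hfn_bds : ∀ n, ∀ᵐ t ∂(volume.restrict (Icc (0:ℝ) T)), 0 ≤ fn n t ∧ fn n t ≤ fmax)
    (hweak : ∀ g : ℝ → ℝ, MemLp g 2 (volume.restrict (Icc (0:ℝ) T)) →
      Tendsto (fun n => ∫ u in (0:ℝ)..T, fn n u * g u) atTop
        (nhds (∫ u in (0:ℝ)..T, fstar u * g u))) :
    TendstoUniformlyOn (fun n t => runnerV τ (fn n) t) (runnerV τ fstar) atTop
      (Icc (0:ℝ) T) :=
  velocities_converge_uniformly_of_weak_convergence_general T τ fmax hτ hfmax fn fstar hfn_meas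
    hfn_bds hweak
end

section
/- Let T > 0, f_max > 0, and let g : ℝ → ℝ be continuous. Let (fⁿ) be measurable functions on [0,T] with 0 ≤ fⁿ ≤ f_max a.e. converging weakly in L²(0,T) to f*, and let Vⁿ, V* : [0,T] → ℝ be continuous functions with Vⁿ → V* uniformly on [0,T]. Then for every t ∈ [0,T], ∫₀ᵗ fⁿ(u) g(Vⁿ(u)) du → ∫₀ᵗ f*(u) g(V*(u)) du as n → ∞. (Applied with g(v) = v(1 - glyc(v)) and g(v) = v·glyc(v), this shows the limiting fat and glycogen energy states correspond to the weak limit control f*.) -/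
/-!
Split `fⁿ · g(Vⁿ) = fⁿ · g(V*) + fⁿ · (g(Vⁿ) - g(V*))`. The first term converges by weak
convergence, tested against `g ∘ V*` cut off at time `t`, which is bounded and hence in `L²`.
The second term tends to zero because the `fⁿ` are uniformly bounded while `g ∘ Vⁿ → g ∘ V*`
uniformly, `g` being uniformly continuous on a compact neighbourhood of the range of `V*`.
-/

open MeasureTheory Real Set Filter Topology

theorem Continuous.comp_tendstoUniformlyOn_of_isCompact {ι α β γ : Type*}
    [PseudoMetricSpace β] [ProperSpace β] [UniformSpace γ] {p : Filter ι} {t : Set α}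
    {F : ι → α → β} {f : α → β} {g : β → γ} (hg : Continuous g) (hft : IsCompact (f '' t))
    (h : TendstoUniformlyOn F f p t) :
    TendstoUniformlyOn (fun i x ↦ g (F i x)) (fun x ↦ g (f x)) p t := by
  have hK : IsCompact (Metric.cthickening 1 (f '' t)) := hft.cthickening
  have hF : ∀ᶠ i in p, ∀ x ∈ t, F i x ∈ Metric.cthickening 1 (f '' t) := by
    filter_upwards [Metric.tendstoUniformlyOn_iff.mp h 1 one_pos] with i hi x hx
    exact Metric.mem_cthickening_of_dist_le _ _ _ _ (mem_image_of_mem f hx)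
      (by rw [dist_comm]; exact (hi x hx).le)
  exact (hK.uniformContinuousOn_of_continuous hg.continuousOn).comp_tendstoUniformlyOn_eventually
    hF (fun x hx ↦ Metric.self_subset_cthickening _ (mem_image_of_mem f hx)) h

theorem ContinuousOn.memLp_restrict_of_isCompact {X E : Type*} [TopologicalSpace X]
    [MeasurableSpace X] [OpensMeasurableSpace X] [NormedAddCommGroup E]
    [SecondCountableTopologyEither X E] {μ : Measure X}
    [IsFiniteMeasureOnCompacts μ] {K : Set X} {f : X → E} (hK : IsCompact K)
    (hKm : MeasurableSet K) (hf : ContinuousOn f K) (p : ENNReal) :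
    MemLp f p (μ.restrict K) := by
  have : IsFiniteMeasure (μ.restrict K) := isFiniteMeasure_restrict.mpr hK.measure_lt_top.ne
  obtain ⟨C, hC⟩ := hK.exists_bound_of_continuousOn hf
  exact .of_bound (hf.aestronglyMeasurable hKm) C (ae_restrict_of_forall_mem hKm hC)

section UniformlyConvergentFactor

variable {ι α : Type*} [MeasurableSpace α] {μ : Measure α} {s : Set α} {l : Filter ι}
  {f G : ι → α → ℝ} {H : α → ℝ} {M : ℝ}

theorem tendsto_setIntegral_mul_sub_of_tendstoUniformlyOn (hsm : MeasurableSet s) (hs : μ s ≠ ⊤)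
    (hf : ∀ i, ∀ᵐ x ∂μ.restrict s, ‖f i x‖ ≤ M) (hG : TendstoUniformlyOn G H l s) :
    Tendsto (fun i ↦ ∫ x in s, f i x * (G i x - H x) ∂μ) l (𝓝 0) := by
  refine Metric.tendsto_nhds.mpr fun ε hε ↦ ?_
  obtain ⟨δ, hδ, hδε⟩ := exists_pos_mul_lt hε (M * μ.real s)
  filter_upwards [Metric.tendstoUniformlyOn_iff.mp hG δ hδ] with i hi
  have hbound : ∀ᵐ x ∂μ.restrict s, ‖f i x * (G i x - H x)‖ ≤ M * δ := by
    filter_upwards [hf i, ae_restrict_mem hsm] with x hfx hx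
    rw [norm_mul, ← dist_eq_norm, dist_comm]
    exact mul_le_mul hfx (hi x hx).le dist_nonneg ((norm_nonneg _).trans hfx)
  calc dist (∫ x in s, f i x * (G i x - H x) ∂μ) 0
      = ‖∫ x in s, f i x * (G i x - H x) ∂μ‖ := dist_zero_right _
    _ ≤ M * δ * μ.real s := norm_setIntegral_le_of_norm_le_const_ae hs.lt_top hbound
    _ = M * μ.real s * δ := by ring
    _ < ε := hδε

theorem tendsto_setIntegral_mul_of_tendstoUniformlyOn {L : ℝ} (hsm : MeasurableSet s)
    (hs : μ s ≠ ⊤) (hf : ∀ i, ∀ᵐ x ∂μ.restrict s, ‖f i x‖ ≤ M) (hG : TendstoUniformlyOn G H l s)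
    (hfG : ∀ i, IntegrableOn (fun x ↦ f i x * G i x) s μ)
    (hfH : ∀ i, IntegrableOn (fun x ↦ f i x * H x) s μ)
    (hlim : Tendsto (fun i ↦ ∫ x in s, f i x * H x ∂μ) l (𝓝 L)) :
    Tendsto (fun i ↦ ∫ x in s, f i x * G i x ∂μ) l (𝓝 L) := by
  have hsplit : ∀ i, ∫ x in s, f i x * G i x ∂μ
      = ∫ x in s, f i x * H x ∂μ + ∫ x in s, f i x * (G i x - H x) ∂μ := fun i ↦ by
    simp only [mul_sub]
    rw [integral_sub (hfG i) (hfH i), add_sub_cancel]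
  simpa only [hsplit, add_zero] using
    hlim.add (tendsto_setIntegral_mul_sub_of_tendstoUniformlyOn hsm hs hf hG)

end UniformlyConvergentFactor

theorem intervalIntegral_mul_indicator_Ioc (F φ : ℝ → ℝ) {a t b : ℝ} (hat : a ≤ t) (htb : t ≤ b) :
    ∫ u in a..b, F u * (Ioc a t).indicator φ u = ∫ u in a..t, F u * φ u := by
  simp only [← indicator_mul_right, intervalIntegral.integral_of_le (hat.trans htb),
    intervalIntegral.integral_of_le hat, integral_indicator measurableSet_Ioc,
    Measure.restrict_restrict measurableSet_Ioc,
    inter_eq_self_of_subset_left (Ioc_subset_Ioc_right htb)]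

theorem energy_integrals_converge_general
    (T fmax : ℝ)
    (g : ℝ → ℝ) (hg_cont : Continuous g)
    (fn : ℕ → ℝ → ℝ) (fstar : ℝ → ℝ)
    (hfn_meas : ∀ n, Measurable (fn n))
    (hfn_bds : ∀ n, ∀ᵐ t ∂(volume.restrict (Icc (0:ℝ) T)), 0 ≤ fn n t ∧ fn n t ≤ fmax)
    (hweak : ∀ h : ℝ → ℝ, MemLp h 2 (volume.restrict (Icc (0:ℝ) T)) →
      Tendsto (fun n => ∫ u in (0:ℝ)..T, fn n u * h u) atTop
        (nhds (∫ u in (0:ℝ)..T, fstar u * h u)))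
    (Vn : ℕ → ℝ → ℝ) (Vstar : ℝ → ℝ)
    (hVn_cont : ∀ n, Continuous (Vn n)) (hVstar_cont : Continuous Vstar)
    (hV_unif : TendstoUniformlyOn (fun n t => Vn n t) Vstar atTop (Icc (0:ℝ) T)) :
    ∀ t ∈ Icc (0:ℝ) T,
      Tendsto (fun n => ∫ u in (0:ℝ)..t, fn n u * g (Vn n u)) atTop
        (nhds (∫ u in (0:ℝ)..t, fstar u * g (Vstar u))) := by
  rintro t ⟨ht0, htT⟩
  have hIoc : Ioc 0 t ⊆ Icc 0 T := fun u hu ↦ ⟨hu.1.le, hu.2.trans htT⟩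
  have hbound : ∀ n, ∀ᵐ u ∂volume.restrict (Ioc 0 t), ‖fn n u‖ ≤ fmax := fun n ↦
    (ae_restrict_of_ae_restrict_of_subset hIoc (hfn_bds n)).mono fun u hu ↦
      (norm_of_nonneg hu.1).trans_le hu.2
  have hint : ∀ V : ℝ → ℝ, Continuous V → ∀ n,
      IntegrableOn (fun u ↦ fn n u * g (V u)) (Ioc 0 t) := fun V hV n ↦
    (((hg_cont.comp hV).continuousOn.integrableOn_Icc.mono_set Ioc_subset_Icc_self).bdd_mul
      (hfn_meas n).aestronglyMeasurable (hbound n))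
  have hlim : Tendsto (fun n ↦ ∫ u in Ioc 0 t, fn n u * g (Vstar u)) atTop
      (𝓝 (∫ u in Ioc 0 t, fstar u * g (Vstar u))) := by
    have hmem : MemLp ((Ioc 0 t).indicator (g ∘ Vstar)) 2 (volume.restrict (Icc 0 T)) :=
      ((hg_cont.comp hVstar_cont).continuousOn.memLp_restrict_of_isCompact isCompact_Icc
        measurableSet_Icc 2).indicator measurableSet_Ioc
    simpa only [intervalIntegral_mul_indicator_Ioc _ _ ht0 htT,
      intervalIntegral.integral_of_le ht0, Function.comp_apply] using hweak _ hmem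
  have hunif := (hg_cont.comp_tendstoUniformlyOn_of_isCompact
    (isCompact_Icc.image hVstar_cont) hV_unif).mono hIoc
  simp only [intervalIntegral.integral_of_le ht0]
  exact tendsto_setIntegral_mul_of_tendstoUniformlyOn measurableSet_Ioc measure_Ioc_lt_top.ne
    hbound hunif (fun n ↦ hint (Vn n) (hVn_cont n) n) (hint Vstar hVstar_cont) hlim

theorem energy_integrals_converge
    (T fmax : ℝ) (hT : 0 < T) (hfmax : 0 < fmax)
    (g : ℝ → ℝ) (hg_cont : Continuous g)
    (fn : ℕ → ℝ → ℝ) (fstar : ℝ → ℝ)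
    (hfn_meas : ∀ n, Measurable (fn n))
    (hfn_bds : ∀ n, ∀ᵐ t ∂(volume.restrict (Icc (0:ℝ) T)), 0 ≤ fn n t ∧ fn n t ≤ fmax)
    (hweak : ∀ h : ℝ → ℝ, MemLp h 2 (volume.restrict (Icc (0:ℝ) T)) →
      Tendsto (fun n => ∫ u in (0:ℝ)..T, fn n u * h u) atTop
        (nhds (∫ u in (0:ℝ)..T, fstar u * h u)))
    (Vn : ℕ → ℝ → ℝ) (Vstar : ℝ → ℝ)
    (hVn_cont : ∀ n, Continuous (Vn n)) (hVstar_cont : Continuous Vstar)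
    (hV_unif : TendstoUniformlyOn (fun n t => Vn n t) Vstar atTop (Icc (0:ℝ) T)) :
    ∀ t ∈ Icc (0:ℝ) T,
      Tendsto (fun n => ∫ u in (0:ℝ)..t, fn n u * g (Vn n u)) atTop
        (nhds (∫ u in (0:ℝ)..t, fstar u * g (Vstar u))) :=
  energy_integrals_converge_general T fmax g hg_cont fn fstar hfn_meas hfn_bds hweak Vn Vstar
    hVn_cont hVstar_cont hV_unif
end
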